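/- arXiv:1311.6511 — 4 statements merged into one kernel-verified Lean document; each statement's English description precedes it below -/
import Mathlib

section
/- Let n ≥ 4 and let s(a,b) and s(c,d) be proper n-sided one-step dice. If s(a,b) beats s(c,d), then at least one of the following holds: c = b, or d = a + 2, or a = c + 1, or b = d + 1. -/
/-- The number of pairs (i,j) for which the i-th face of die `A` is strictly greater than
the j-th face of die `B`.  (A die is modeled as a multiset of faces, which is equivalent to
a nondecreasing tuple.) -/
def diceWins (A B : Multiset ℕ) : ℕ :=
  (A.map (fun a => (B.filter (fun b => b < a)).card)).sum

/-- Die `A` beats die `B`. -/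
def diceBeats (A B : Multiset ℕ) : Prop := diceWins B A < diceWins A B

/-- Dice `A` and `B` tie. -/
def diceTies (A B : Multiset ℕ) : Prop := diceWins A B = diceWins B A

/-- A proper `n`-sided die: `n` faces, each between `1` and `n`, summing to `n(n+1)/2`. -/
def isProperDie (n : ℕ) (A : Multiset ℕ) : Prop :=
  Multiset.card A = n ∧ (∀ x ∈ A, 1 ≤ x ∧ x ≤ n) ∧ A.sum = n * (n + 1) / 2

/-- The one-step die `s(a,b)`: the multiset `{1,…,n}` with `a` and `b` removed and
`a+1` and `b-1` added. -/
def stepDie (n a b : ℕ) : Multiset ℕ :=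
  (Multiset.Icc 1 n - {a, b}) + {a + 1, b - 1}

/-- The conditions on `(a,b)` under which `s(a,b)` is a proper `n`-sided one-step die. -/
def validStep (n a b : ℕ) : Prop :=
  1 ≤ a ∧ a ≤ n - 1 ∧ 2 ≤ b ∧ b ≤ n ∧ b ≠ a ∧ b ≠ a + 1

instance (n a b : ℕ) : Decidable (validStep n a b) := by unfold validStep; infer_instance

/-- `D` is a proper `n`-sided one-step die. -/
def isOneStepDie (n : ℕ) (D : Multiset ℕ) : Prop :=
  ∃ a b, validStep n a b ∧ D = stepDie n a b

/-- A three-element set of dice is intransitive if it can be labeled so that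
`A` beats `B`, `B` beats `C` and `C` beats `A`. -/
def IntransitiveTriple (s : Finset (Multiset ℕ)) : Prop :=
  ∃ A B C, s = {A, B, C} ∧ diceBeats A B ∧ diceBeats B C ∧ diceBeats C A

/-- A three-element set of dice is transitive if it can be labeled so that
`A` beats `B`, `A` beats `C` and `B` beats `C`. -/
def TransitiveTriple (s : Finset (Multiset ℕ)) : Prop :=
  ∃ A B C, s = {A, B, C} ∧ diceBeats A B ∧ diceBeats A C ∧ diceBeats B C

/-- The set of unordered triples of pairwise distinct proper `n`-sided one-step dice
in which no two of the three dice tie. -/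
def tripleSet (n : ℕ) : Set (Finset (Multiset ℕ)) :=
  {s | s.card = 3 ∧ (∀ D ∈ s, isOneStepDie n D) ∧
    ∀ A ∈ s, ∀ B ∈ s, A ≠ B → ¬ diceTies A B}

namespace BF

def sgn (x y : ℕ) : ℤ := if y < x then 1 else if x < y then -1 else 0

def Z (A B : Multiset ℕ) : ℤ := (diceWins A B : ℤ) - (diceWins B A : ℤ)

lemma diceWins_add_left (A B C : Multiset ℕ) :
    diceWins (A + B) C = diceWins A C + diceWins B C := by
  simp [diceWins]

lemma diceWins_add_right (A B C : Multiset ℕ) :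
    diceWins A (B + C) = diceWins A B + diceWins A C := by
  unfold diceWins
  simp only [Multiset.filter_add, Multiset.card_add]
  exact Multiset.sum_map_add

lemma Z_add_left (A B C : Multiset ℕ) : Z (A + B) C = Z A C + Z B C := by
  simp [Z, diceWins_add_left, diceWins_add_right]; ring

lemma Z_add_right (A B C : Multiset ℕ) : Z A (B + C) = Z A B + Z A C := by
  simp [Z, diceWins_add_left, diceWins_add_right]; ring

lemma Z_self (A : Multiset ℕ) : Z A A = 0 := by simp [Z]

lemma pair_eq (x y : ℕ) : ({x, y} : Multiset ℕ) = {x} + {y} := rfl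

lemma diceWins_singleton_left (x : ℕ) (B : Multiset ℕ) :
    diceWins {x} B = Multiset.card (B.filter (fun b => b < x)) := by
  simp [diceWins]

lemma diceWins_singleton_right (A : Multiset ℕ) (x : ℕ) :
    diceWins A {x} = Multiset.card (A.filter (fun a => x < a)) := by
  unfold diceWins
  induction A using Multiset.induction_on with
  | empty => simp
  | cons a s ih =>
      rw [Multiset.map_cons, Multiset.sum_cons, ih, Multiset.filter_cons,
        Multiset.card_add, Multiset.filter_singleton]
      split_ifs <;> simp

lemma Z_single (x y : ℕ) : Z {x} {y} = sgn x y := by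
  simp only [Z, sgn, diceWins_singleton_left, Multiset.filter_singleton]
  split_ifs <;> simp_all <;> omega

lemma card_filter_lt (n x : ℕ) (h1 : 1 ≤ x) (h2 : x ≤ n) :
    Multiset.card ((Multiset.Icc 1 n).filter (fun b => b < x)) = x - 1 := by
  have : Multiset.Icc 1 n = (Finset.Icc 1 n).val := rfl
  rw [this, ← Finset.filter_val]
  have : Finset.filter (fun b => b < x) (Finset.Icc 1 n) = Finset.Ico 1 x := by
    ext z; simp only [Finset.mem_filter, Finset.mem_Icc, Finset.mem_Ico]; omega
  rw [this]
  simpa using Nat.card_Ico 1 x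

lemma card_filter_gt (n x : ℕ) (h1 : 1 ≤ x) (h2 : x ≤ n) :
    Multiset.card ((Multiset.Icc 1 n).filter (fun b => x < b)) = n - x := by
  have : Multiset.Icc 1 n = (Finset.Icc 1 n).val := rfl
  rw [this, ← Finset.filter_val]
  have : Finset.filter (fun b => x < b) (Finset.Icc 1 n) = Finset.Icc (x+1) n := by
    ext z; simp only [Finset.mem_filter, Finset.mem_Icc]; omega
  rw [this]
  have := Nat.card_Icc (x+1) n
  simpa using by omega

lemma Z_Icc_single (n x : ℕ) (h1 : 1 ≤ x) (h2 : x ≤ n) :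
    Z (Multiset.Icc 1 n) {x} = (n : ℤ) + 1 - 2 * x := by
  rw [Z, diceWins_singleton_left, diceWins_singleton_right,
    card_filter_lt n x h1 h2, card_filter_gt n x h1 h2]
  omega

lemma Z_single_Icc (n x : ℕ) (h1 : 1 ≤ x) (h2 : x ≤ n) :
    Z {x} (Multiset.Icc 1 n) = -((n : ℤ) + 1 - 2 * x) := by
  have := Z_Icc_single n x h1 h2
  simp only [Z] at this ⊢
  omega

lemma grpF (a c : ℕ) (h : a ≠ c + 1) :
    sgn (a+1) (c+1) - sgn (a+1) c - sgn a (c+1) + sgn a c ≤ 0 := by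
  simp only [sgn]; split_ifs <;> omega

lemma grpG (a d' : ℕ) (h : d' ≠ a) :
    sgn (a+1) (d'+1) - sgn (a+1) (d'+2) - sgn a (d'+1) + sgn a (d'+2) ≤ 0 := by
  simp only [sgn]; split_ifs <;> omega

lemma grpH (b' c : ℕ) (h : c ≠ b' + 2) :
    sgn (b'+1) (c+1) - sgn (b'+1) c - sgn (b'+2) (c+1) + sgn (b'+2) c ≤ 0 := by
  simp only [sgn]; split_ifs <;> omega

lemma grpK (b' d' : ℕ) (h : b' ≠ d' + 1) :
    sgn (b'+1) (d'+1) - sgn (b'+1) (d'+2) - sgn (b'+2) (d'+1) + sgn (b'+2) (d'+2) ≤ 0 := by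
  simp only [sgn]; split_ifs <;> omega

lemma pair_le_Icc (n x y : ℕ) (hxy : x ≠ y) (hx1 : 1 ≤ x) (hxn : x ≤ n)
    (hy1 : 1 ≤ y) (hyn : y ≤ n) : ({x, y} : Multiset ℕ) ≤ Multiset.Icc 1 n := by
  rw [Multiset.le_iff_subset (by simp [hxy])]
  intro z hz
  rw [Multiset.mem_Icc]
  rcases Multiset.mem_cons.mp hz with h | h
  · omega
  · rw [Multiset.mem_singleton] at h; omega

end BF

open BF in
theorem beats_forms (n a b c d : ℕ) (hn : 4 ≤ n)
    (hab : validStep n a b) (hcd : validStep n c d)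
    (h : diceBeats (stepDie n a b) (stepDie n c d)) :
    c = b ∨ d = a + 2 ∨ a = c + 1 ∨ b = d + 1 := by
  obtain ⟨ha1, ha2, hb2, hbn, hba, hba1⟩ := hab
  obtain ⟨hc1, hc2, hd2, hdn, hdc, hdc1⟩ := hcd
  obtain ⟨b', rfl⟩ : ∃ b', b = b' + 2 := ⟨b - 2, by omega⟩
  obtain ⟨d', rfl⟩ : ∃ d', d = d' + 2 := ⟨d - 2, by omega⟩
  have hQ : ({a, b'+2} : Multiset ℕ) ≤ Multiset.Icc 1 n :=
    pair_le_Icc n a (b'+2) (by omega) (by omega) (by omega) (by omega) (by omega)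
  have hS : ({c, d'+2} : Multiset ℕ) ≤ Multiset.Icc 1 n :=
    pair_le_Icc n c (d'+2) (by omega) (by omega) (by omega) (by omega) (by omega)
  have hsub : b' + 2 - 1 = b' + 1 := by omega
  have hsud : d' + 2 - 1 = d' + 1 := by omega
  have hA : stepDie n a (b'+2) + {a, b'+2} = Multiset.Icc 1 n + {a+1, b'+1} := by
    rw [stepDie, hsub, add_right_comm, tsub_add_cancel_of_le hQ]
  have hB : stepDie n c (d'+2) + {c, d'+2} = Multiset.Icc 1 n + {c+1, d'+1} := by
    rw [stepDie, hsud, add_right_comm, tsub_add_cancel_of_le hS]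
  have h1 : Z (stepDie n a (b'+2) + {a, b'+2}) (stepDie n c (d'+2) + {c, d'+2})
      = Z (Multiset.Icc 1 n + {a+1, b'+1}) (Multiset.Icc 1 n + {c+1, d'+1}) := by
    rw [hA, hB]
  have h2 : Z (stepDie n a (b'+2) + {a, b'+2}) {c, d'+2}
      = Z (Multiset.Icc 1 n + {a+1, b'+1}) {c, d'+2} := by rw [hA]
  have h3 : Z {a, b'+2} (stepDie n c (d'+2) + {c, d'+2})
      = Z {a, b'+2} (Multiset.Icc 1 n + {c+1, d'+1}) := by rw [hB]
  simp only [pair_eq, Z_add_left, Z_add_right, Z_single, Z_self] at h1 h2 h3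
  have v1 := Z_Icc_single n (c+1) (by omega) (by omega)
  have v2 := Z_Icc_single n (d'+1) (by omega) (by omega)
  have v3 := Z_Icc_single n c (by omega) (by omega)
  have v4 := Z_Icc_single n (d'+2) (by omega) (by omega)
  have w1 := Z_single_Icc n (a+1) (by omega) (by omega)
  have w2 := Z_single_Icc n (b'+1) (by omega) (by omega)
  have w3 := Z_single_Icc n a (by omega) (by omega)
  have w4 := Z_single_Icc n (b'+2) (by omega) (by omega)
  have hbeats : 0 < Z (stepDie n a (b'+2)) (stepDie n c (d'+2)) := by
    unfold diceBeats at h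
    simp only [Z]
    omega
  by_contra hcon
  push_neg at hcon
  obtain ⟨n1, n2, n3, n4⟩ := hcon
  have g1 := grpF a c n3
  have g2 := grpG a d' (by omega)
  have g3 := grpH b' c (by omega)
  have g4 := grpK b' d' (by omega)
  push_cast at v1 v2 v3 v4 w1 w2 w3 w4
  linarith
end

section
/- Let n ≥ 4 and suppose s(x,y) and s(y,z) are proper n-sided one-step dice that do not tie. Then s(x,y) beats s(y,z). -/
lemma dW_add_left (A B C : Multiset ℕ) : diceWins (A + B) C = diceWins A C + diceWins B C := by
  simp [diceWins]

lemma dW_add_right (A B C : Multiset ℕ) : diceWins A (B + C) = diceWins A B + diceWins A C := by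
  simp [diceWins, Multiset.sum_map_add]

lemma dW_pair_left (a b : ℕ) (B : Multiset ℕ) :
    diceWins {a, b} B = diceWins {a} B + diceWins {b} B := by
  rw [show ({a,b} : Multiset ℕ) = {a} + {b} by rfl, dW_add_left]

lemma dW_pair_right (a b : ℕ) (A : Multiset ℕ) :
    diceWins A {a, b} = diceWins A {a} + diceWins A {b} := by
  rw [show ({a,b} : Multiset ℕ) = {a} + {b} by rfl, dW_add_right]

lemma dW_single_single (a b : ℕ) : diceWins {a} {b} = if b < a then 1 else 0 := by
  simp [diceWins, Multiset.filter_singleton]; split_ifs <;> simp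

lemma dW_Icc_single (n t : ℕ) (h1 : 1 ≤ t) : diceWins (Multiset.Icc 1 n) {t} = n - t := by
  have : diceWins (Multiset.Icc 1 n) {t}
      = ∑ a ∈ Finset.Icc 1 n, (Multiset.filter (fun b => b < a) {t}).card := rfl
  rw [this]
  have : ∀ a : ℕ, (Multiset.filter (fun b => b < a) ({t} : Multiset ℕ)).card
      = if t < a then 1 else 0 := by
    intro a; simp [Multiset.filter_singleton]; split_ifs <;> simp
  simp only [this, Finset.sum_ite_eq', Finset.sum_boole]
  rw [show Finset.filter (fun a => t < a) (Finset.Icc 1 n) = Finset.Ioc t n by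
    ext a; simp [Finset.mem_Icc, Finset.mem_Ioc]; omega]
  simp [Nat.card_Ioc]

lemma dW_single_Icc (n t : ℕ) (h2 : t ≤ n) : diceWins {t} (Multiset.Icc 1 n) = t - 1 := by
  have : diceWins {t} (Multiset.Icc 1 n)
      = ((Finset.Icc 1 n).val.filter (fun b => b < t)).card := by
    simp [diceWins]; rfl
  rw [this, ← Finset.filter_val, show Finset.filter (fun b => b < t) (Finset.Icc 1 n) = Finset.Ico 1 t by
    ext a; simp [Finset.mem_Icc, Finset.mem_Ico]; omega]
  simp [Nat.card_Ico]

lemma step_add (n a b : ℕ) (ha1 : 1 ≤ a) (han : a + 1 ≤ n) (hb1 : 1 ≤ b) (hbn : b ≤ n)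
    (hba : b ≠ a) : stepDie n a b + {a, b} = Multiset.Icc 1 n + {a + 1, b - 1} := by
  have hsub : ({a, b} : Multiset ℕ) ≤ Multiset.Icc 1 n := by
    rw [Multiset.le_iff_count]
    intro t
    have hc : ∀ s : ℕ, Multiset.count s (Multiset.Icc 1 n) = if 1 ≤ s ∧ s ≤ n then 1 else 0 := by
      intro s
      by_cases h : 1 ≤ s ∧ s ≤ n
      · rw [if_pos h]
        exact Multiset.count_eq_one_of_mem (Finset.Icc 1 n).nodup (by simp [Multiset.mem_Icc]; omega)
      · rw [if_neg h]
        exact Multiset.count_eq_zero_of_notMem (by simp [Multiset.mem_Icc]; omega)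
    rw [hc]
    rw [show ({a, b} : Multiset ℕ) = a ::ₘ {b} from rfl, Multiset.count_cons, Multiset.count_singleton]
    split_ifs <;> omega
  rw [stepDie, add_right_comm, tsub_add_cancel_of_le hsub]

set_option maxHeartbeats 4000000 in
theorem beats_form_one (n x y z : ℕ) (hn : 4 ≤ n)
    (h1 : validStep n x y) (h2 : validStep n y z)
    (hnotie : ¬ diceTies (stepDie n x y) (stepDie n y z)) :
    diceBeats (stepDie n x y) (stepDie n y z) := by
  obtain ⟨hx1, hxn, hy2, hyn, hyx, hyx1⟩ := h1
  obtain ⟨hy1, hyn1, hz2, hzn, hzy, hzy1⟩ := h2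
  have eP : stepDie n x y + {x, y} = Multiset.Icc 1 n + {x + 1, y - 1} :=
    step_add n x y (by omega) (by omega) (by omega) (by omega) (by omega)
  have eQ : stepDie n y z + {y, z} = Multiset.Icc 1 n + {y + 1, z - 1} :=
    step_add n y z (by omega) (by omega) (by omega) (by omega) (by omega)
  set P := stepDie n x y with hP
  set Q := stepDie n y z with hQ
  have e1 : diceWins (P + {x, y}) (Q + {y, z})
      = diceWins (Multiset.Icc 1 n + {x + 1, y - 1}) (Multiset.Icc 1 n + {y + 1, z - 1}) := by
    rw [eP, eQ]
  have e2 : diceWins (Q + {y, z}) (P + {x, y})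
      = diceWins (Multiset.Icc 1 n + {y + 1, z - 1}) (Multiset.Icc 1 n + {x + 1, y - 1}) := by
    rw [eP, eQ]
  have e3 : diceWins {x, y} (Q + {y, z}) = diceWins {x, y} (Multiset.Icc 1 n + {y + 1, z - 1}) := by
    rw [eQ]
  have e4 : diceWins (Q + {y, z}) {x, y} = diceWins (Multiset.Icc 1 n + {y + 1, z - 1}) {x, y} := by
    rw [eQ]
  have e5 : diceWins (P + {x, y}) {y, z} = diceWins (Multiset.Icc 1 n + {x + 1, y - 1}) {y, z} := by
    rw [eP]
  have e6 : diceWins {y, z} (P + {x, y}) = diceWins {y, z} (Multiset.Icc 1 n + {x + 1, y - 1}) := by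
    rw [eP]
  simp only [dW_add_left, dW_add_right, dW_pair_left, dW_pair_right] at e1 e2 e3 e4 e5 e6
  have v0 : diceWins {x+1} {y+1} = if y < x then 1 else 0 := by
    rw [dW_single_single] <;> (split_ifs <;> omega)
  have v1 : diceWins {x+1} {z-1} = if z < x + 2 then 1 else 0 := by
    rw [dW_single_single] <;> (split_ifs <;> omega)
  have v2 : diceWins {x+1} {y} = if y < x then 1 else 0 := by
    rw [dW_single_single] <;> (split_ifs <;> omega)
  have v3 : diceWins {x+1} {z} = if z < x + 1 then 1 else 0 := by
    rw [dW_single_single] <;> (split_ifs <;> omega)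
  have v4 : diceWins {y-1} {y+1} = 0 := by
    rw [dW_single_single] <;> (split_ifs <;> omega)
  have v5 : diceWins {y-1} {z-1} = if z < y then 1 else 0 := by
    rw [dW_single_single] <;> (split_ifs <;> omega)
  have v6 : diceWins {y-1} {y} = 0 := by
    rw [dW_single_single] <;> (split_ifs <;> omega)
  have v7 : diceWins {y-1} {z} = if z + 1 < y then 1 else 0 := by
    rw [dW_single_single] <;> (split_ifs <;> omega)
  have v8 : diceWins {x} {y+1} = if y + 1 < x then 1 else 0 := by
    rw [dW_single_single] <;> (split_ifs <;> omega)
  have v9 : diceWins {x} {z-1} = if z < x + 1 then 1 else 0 := by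
    rw [dW_single_single] <;> (split_ifs <;> omega)
  have v10 : diceWins {x} {y} = if y < x then 1 else 0 := by
    rw [dW_single_single] <;> (split_ifs <;> omega)
  have v11 : diceWins {x} {z} = if z < x then 1 else 0 := by
    rw [dW_single_single] <;> (split_ifs <;> omega)
  have v12 : diceWins {y} {y+1} = 0 := by
    rw [dW_single_single] <;> (split_ifs <;> omega)
  have v13 : diceWins {y} {z-1} = if z < y then 1 else 0 := by
    rw [dW_single_single] <;> (split_ifs <;> omega)
  have v14 : diceWins {y} {y} = 0 := by
    rw [dW_single_single] <;> (split_ifs <;> omega)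
  have v15 : diceWins {y} {z} = if z < y then 1 else 0 := by
    rw [dW_single_single] <;> (split_ifs <;> omega)
  have v16 : diceWins {y+1} {x+1} = if y < x then 0 else 1 := by
    rw [dW_single_single] <;> (split_ifs <;> omega)
  have v17 : diceWins {z-1} {x+1} = if x + 2 < z then 1 else 0 := by
    rw [dW_single_single] <;> (split_ifs <;> omega)
  have v18 : diceWins {y} {x+1} = if y < x then 0 else 1 := by
    rw [dW_single_single] <;> (split_ifs <;> omega)
  have v19 : diceWins {z} {x+1} = if z < x + 2 then 0 else 1 := by
    rw [dW_single_single] <;> (split_ifs <;> omega)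
  have v20 : diceWins {y+1} {y-1} = 1 := by
    rw [dW_single_single] <;> (split_ifs <;> omega)
  have v21 : diceWins {z-1} {y-1} = if z < y then 0 else 1 := by
    rw [dW_single_single] <;> (split_ifs <;> omega)
  have v22 : diceWins {y} {y-1} = 1 := by
    rw [dW_single_single] <;> (split_ifs <;> omega)
  have v23 : diceWins {z} {y-1} = if z < y then 0 else 1 := by
    rw [dW_single_single] <;> (split_ifs <;> omega)
  have v24 : diceWins {y+1} {x} = if y < x then 0 else 1 := by
    rw [dW_single_single] <;> (split_ifs <;> omega)
  have v25 : diceWins {z-1} {x} = if z < x + 2 then 0 else 1 := by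
    rw [dW_single_single] <;> (split_ifs <;> omega)
  have v26 : diceWins {y} {x} = if y < x then 0 else 1 := by
    rw [dW_single_single] <;> (split_ifs <;> omega)
  have v27 : diceWins {z} {x} = if z < x + 1 then 0 else 1 := by
    rw [dW_single_single] <;> (split_ifs <;> omega)
  have v28 : diceWins {y+1} {y} = 1 := by
    rw [dW_single_single] <;> (split_ifs <;> omega)
  have v29 : diceWins {z-1} {y} = if z < y then 0 else 1 := by
    rw [dW_single_single] <;> (split_ifs <;> omega)
  have v30 : diceWins {y} {y} = 0 := by
    rw [dW_single_single] <;> (split_ifs <;> omega)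
  have v31 : diceWins {z} {y} = if z < y then 0 else 1 := by
    rw [dW_single_single] <;> (split_ifs <;> omega)
  have wI0 : diceWins (Multiset.Icc 1 n) {x} = n - (x) := by
    rw [dW_Icc_single _ _ (by omega)]
  have wJ0 : diceWins {x} (Multiset.Icc 1 n) = (x) - 1 := by
    rw [dW_single_Icc _ _ (by omega)]
  have wI1 : diceWins (Multiset.Icc 1 n) {x+1} = n - (x+1) := by
    rw [dW_Icc_single _ _ (by omega)]
  have wJ1 : diceWins {x+1} (Multiset.Icc 1 n) = (x+1) - 1 := by
    rw [dW_single_Icc _ _ (by omega)]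
  have wI2 : diceWins (Multiset.Icc 1 n) {y-1} = n - (y-1) := by
    rw [dW_Icc_single _ _ (by omega)]
  have wJ2 : diceWins {y-1} (Multiset.Icc 1 n) = (y-1) - 1 := by
    rw [dW_single_Icc _ _ (by omega)]
  have wI3 : diceWins (Multiset.Icc 1 n) {y} = n - (y) := by
    rw [dW_Icc_single _ _ (by omega)]
  have wJ3 : diceWins {y} (Multiset.Icc 1 n) = (y) - 1 := by
    rw [dW_single_Icc _ _ (by omega)]
  have wI4 : diceWins (Multiset.Icc 1 n) {y+1} = n - (y+1) := by
    rw [dW_Icc_single _ _ (by omega)]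
  have wJ4 : diceWins {y+1} (Multiset.Icc 1 n) = (y+1) - 1 := by
    rw [dW_single_Icc _ _ (by omega)]
  have wI5 : diceWins (Multiset.Icc 1 n) {z-1} = n - (z-1) := by
    rw [dW_Icc_single _ _ (by omega)]
  have wJ5 : diceWins {z-1} (Multiset.Icc 1 n) = (z-1) - 1 := by
    rw [dW_single_Icc _ _ (by omega)]
  have wI6 : diceWins (Multiset.Icc 1 n) {z} = n - (z) := by
    rw [dW_Icc_single _ _ (by omega)]
  have wJ6 : diceWins {z} (Multiset.Icc 1 n) = (z) - 1 := by
    rw [dW_single_Icc _ _ (by omega)]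
  simp only [v0, v1, v2, v3, v4, v5, v6, v7, v8, v9, v10, v11, v12, v13, v14, v15, v16, v17, v18, v19, v20, v21, v22, v23, v24, v25, v26, v27, v28, v29, v30, v31, wI0, wJ0, wI1, wJ1, wI2, wJ2, wI3, wJ3, wI4, wJ4, wI5, wJ5, wI6, wJ6] at e1 e2 e3 e4 e5 e6

  obtain ⟨p0, q0, hpe0, hqe0⟩ :
      ∃ p q : ℕ, (if y < x then 1 else 0) = p ∧ (if y < x then 0 else 1) = q := ⟨_, _, rfl, rfl⟩
  obtain ⟨p1, q1, hpe1, hqe1⟩ :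
      ∃ p q : ℕ, (if y + 1 < x then 1 else 0) = p ∧ (if y + 1 < x then 0 else 1) = q := ⟨_, _, rfl, rfl⟩
  obtain ⟨p2, q2, hpe2, hqe2⟩ :
      ∃ p q : ℕ, (if z < x then 1 else 0) = p ∧ (if z < x then 0 else 1) = q := ⟨_, _, rfl, rfl⟩
  obtain ⟨p3, q3, hpe3, hqe3⟩ :
      ∃ p q : ℕ, (if z < x + 1 then 1 else 0) = p ∧ (if z < x + 1 then 0 else 1) = q := ⟨_, _, rfl, rfl⟩
  obtain ⟨p4, q4, hpe4, hqe4⟩ :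
      ∃ p q : ℕ, (if z < x + 2 then 1 else 0) = p ∧ (if z < x + 2 then 0 else 1) = q := ⟨_, _, rfl, rfl⟩
  obtain ⟨p5, q5, hpe5, hqe5⟩ :
      ∃ p q : ℕ, (if x + 2 < z then 1 else 0) = p ∧ (if x + 2 < z then 0 else 1) = q := ⟨_, _, rfl, rfl⟩
  obtain ⟨p6, q6, hpe6, hqe6⟩ :
      ∃ p q : ℕ, (if z < y then 1 else 0) = p ∧ (if z < y then 0 else 1) = q := ⟨_, _, rfl, rfl⟩
  obtain ⟨p7, q7, hpe7, hqe7⟩ :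
      ∃ p q : ℕ, (if z + 1 < y then 1 else 0) = p ∧ (if z + 1 < y then 0 else 1) = q := ⟨_, _, rfl, rfl⟩
  simp only [hpe0, hqe0, hpe1, hqe1, hpe2, hqe2, hpe3, hqe3, hpe4, hqe4, hpe5, hqe5, hpe6, hqe6, hpe7, hqe7] at e1 e2 e3 e4 e5 e6
  clear v0 v1 v2 v3 v4 v5 v6 v7 v8 v9 v10 v11 v12 v13 v14 v15 v16 v17 v18 v19 v20 v21 v22 v23 v24 v25 v26 v27 v28 v29 v30 v31 wI0 wJ0 wI1 wJ1 wI2 wJ2 wI3 wJ3 wI4 wJ4 wI5 wJ5 wI6 wJ6 eP eQ hP hQ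
  have key : diceWins P Q + ((x) - 1) + ((y) - 1) + ((y+1) - 1) + ((z-1) - 1) + (n - (x+1)) + (n - (y)) + (n - (y-1)) + (n - (z)) + 1 + p0 + p1 + p3 + p3 + p5 + p6 + p7 + q0 + q0 + q3 + q6 + q6 = diceWins Q P + ((x+1) - 1) + ((y) - 1) + ((y-1) - 1) + ((z) - 1) + (n - (x)) + (n - (y)) + (n - (y+1)) + (n - (z-1)) + 1 + 1 + p0 + p0 + p2 + p4 + p6 + p6 + q0 + q0 + q4 + q4 + q6 + q6 := by
    omega
  have hf0 : p1 ≤ p0 := by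
    rw [← hpe1, ← hpe0]; split_ifs <;> omega
  have hf1 : p2 ≤ p3 := by
    rw [← hpe2, ← hpe3]; split_ifs <;> omega
  have hf2 : p3 ≤ p4 := by
    rw [← hpe3, ← hpe4]; split_ifs <;> omega
  have hf3 : p7 ≤ p6 := by
    rw [← hpe7, ← hpe6]; split_ifs <;> omega
  have hf4 : p4 + p5 ≤ 1 := by
    rw [← hpe4, ← hpe5]; split_ifs <;> omega
  have hf5 : p3 ≤ 1 := by
    rw [← hpe3]; split_ifs <;> omega
  have hf6 : p3 + q3 = 1 := by
    rw [← hpe3, ← hqe3]; split_ifs <;> omega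
  have hf7 : p4 + q4 = 1 := by
    rw [← hpe4, ← hqe4]; split_ifs <;> omega
  clear e1 e2 e3 e4 e5 e6 hpe0 hqe0 hpe1 hqe1 hpe2 hqe2 hpe3 hqe3 hpe4 hqe4 hpe5 hqe5 hpe6 hqe6 hpe7 hqe7
  simp only [diceTies] at hnotie
  simp only [diceBeats]
  obtain ⟨WPQ, hWPQ⟩ : ∃ w, diceWins P Q = w := ⟨_, rfl⟩
  obtain ⟨WQP, hWQP⟩ : ∃ w, diceWins Q P = w := ⟨_, rfl⟩
  rw [hWPQ, hWQP] at key hnotie ⊢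
  clear hWPQ hWQP
  clear_value P Q
  clear P Q
  omega
end

section
/- Let n ≥ 4 and suppose s(x+1,y) and s(x,z) are proper n-sided one-step dice that do not tie. Then s(x+1,y) beats s(x,z). -/
namespace BFT

def sgn (a b : ℕ) : ℤ := if b < a then 1 else if a < b then -1 else 0

def mm (A B : Multiset ℕ) : ℤ := (A.map (fun a => (B.map (fun b => sgn a b)).sum)).sum

lemma mm_add_left (A A' B : Multiset ℕ) : mm (A + A') B = mm A B + mm A' B := by
  simp [mm]

lemma mm_add_right (A B B' : Multiset ℕ) : mm A (B + B') = mm A B + mm A B' := by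
  simp only [mm, Multiset.map_add, Multiset.sum_add, ← Multiset.sum_map_add]

lemma sgn_row (a : ℕ) (B : Multiset ℕ) :
    (B.map (fun b => sgn a b)).sum
      = ((B.filter (fun b => b < a)).card : ℤ) - ((B.filter (fun b => a < b)).card : ℤ) := by
  induction B using Multiset.induction with
  | empty => simp
  | cons b B ih =>
    simp only [Multiset.map_cons, Multiset.sum_cons, Multiset.filter_cons, ih]
    by_cases h1 : b < a <;> by_cases h2 : a < b <;>
      simp [sgn, h1, h2] <;> omega

lemma sgn_col (b : ℕ) (A : Multiset ℕ) :
    (A.map (fun a => sgn a b)).sum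
      = ((A.filter (fun a => b < a)).card : ℤ) - ((A.filter (fun a => a < b)).card : ℤ) := by
  induction A using Multiset.induction with
  | empty => simp
  | cons a A ih =>
    simp only [Multiset.map_cons, Multiset.sum_cons, Multiset.filter_cons, ih]
    by_cases h1 : b < a <;> by_cases h2 : a < b <;>
      simp [sgn, h1, h2] <;> omega

lemma ind_sum (p : ℕ → Prop) [DecidablePred p] (B : Multiset ℕ) :
    (B.map (fun b => if p b then 1 else 0)).sum = (B.filter p).card := by
  induction B using Multiset.induction with
  | empty => simp
  | cons b B ih =>
    simp only [Multiset.map_cons, Multiset.sum_cons, Multiset.filter_cons, ih]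
    by_cases h : p b <;> simp [h] <;> omega

lemma wins_sub (A B : Multiset ℕ) : (diceWins A B : ℤ) - (diceWins B A : ℤ) = mm A B := by
  induction A using Multiset.induction with
  | empty => simp [diceWins, mm]
  | cons a A ih =>
    have h1 : diceWins (a ::ₘ A) B = (B.filter (fun b => b < a)).card + diceWins A B := by
      simp [diceWins]
    have h2 : diceWins B (a ::ₘ A) = diceWins B A + (B.filter (fun b => a < b)).card := by
      unfold diceWins
      have hpt : ∀ b ∈ B, ((a ::ₘ A).filter (fun t => t < b)).card
          = (A.filter (fun t => t < b)).card + (if a < b then 1 else 0) := by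
        intro b _
        rw [Multiset.filter_cons]
        by_cases h : a < b <;> simp [h]
      rw [Multiset.map_congr rfl hpt, Multiset.sum_map_add, ind_sum]
    have h3 : mm (a ::ₘ A) B = (B.map (fun b => sgn a b)).sum + mm A B := by
      simp [mm]
    rw [h1, h2, h3, sgn_row]
    push_cast
    linarith

lemma mm_single (c : ℕ) (B : Multiset ℕ) : mm {c} B = (B.map (fun b => sgn c b)).sum := by
  simp [mm]

lemma mm_pair_left (c d : ℕ) (B : Multiset ℕ) : mm {c, d} B = mm {c} B + mm {d} B := by
  rw [show ({c, d} : Multiset ℕ) = {c} + {d} from rfl, mm_add_left]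

lemma mm_pair_right (A : Multiset ℕ) (c d : ℕ) : mm A {c, d} = mm A {c} + mm A {d} := by
  rw [show ({c, d} : Multiset ℕ) = {c} + {d} from rfl, mm_add_right]

lemma mm_single_single (c d : ℕ) : mm {c} {d} = sgn c d := by simp [mm]

lemma filter_lt_card (n c : ℕ) (h1 : 1 ≤ c) (h2 : c ≤ n) :
    ((Multiset.Icc 1 n).filter (fun b => b < c)).card = c - 1 := by
  have e : (Multiset.Icc 1 n).filter (fun b => b < c)
      = ((Finset.Icc 1 n).filter (fun b => b < c)).val := by
    rw [Finset.filter_val]; rfl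
  rw [e]
  show ((Finset.Icc 1 n).filter (fun b => b < c)).card = c - 1
  have e2 : (Finset.Icc 1 n).filter (fun b => b < c) = Finset.Icc 1 (c - 1) := by
    ext j; simp [Finset.mem_filter, Finset.mem_Icc]; omega
  rw [e2, Nat.card_Icc]; omega

lemma filter_gt_card (n c : ℕ) (h1 : 1 ≤ c) (h2 : c ≤ n) :
    ((Multiset.Icc 1 n).filter (fun b => c < b)).card = n - c := by
  have e : (Multiset.Icc 1 n).filter (fun b => c < b)
      = ((Finset.Icc 1 n).filter (fun b => c < b)).val := by
    rw [Finset.filter_val]; rfl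
  rw [e]
  show ((Finset.Icc 1 n).filter (fun b => c < b)).card = n - c
  have e2 : (Finset.Icc 1 n).filter (fun b => c < b) = Finset.Icc (c + 1) n := by
    ext j; simp [Finset.mem_filter, Finset.mem_Icc]; omega
  rw [e2, Nat.card_Icc]; omega

lemma mm_single_icc (c n : ℕ) (h1 : 1 ≤ c) (h2 : c ≤ n) :
    mm {c} (Multiset.Icc 1 n) = 2 * (c : ℤ) - n - 1 := by
  rw [mm_single, sgn_row, filter_lt_card n c h1 h2, filter_gt_card n c h1 h2]
  omega

lemma mm_icc_single (t n : ℕ) (h1 : 1 ≤ t) (h2 : t ≤ n) :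
    mm (Multiset.Icc 1 n) {t} = (n : ℤ) + 1 - 2 * t := by
  have e : mm (Multiset.Icc 1 n) {t}
      = ((Multiset.Icc 1 n).map (fun a => sgn a t)).sum := by
    simp [mm]
  rw [e, sgn_col, filter_gt_card n t h1 h2, filter_lt_card n t h1 h2]
  omega

lemma sum_icc_two (n : ℕ) : (∑ i ∈ Finset.Icc 1 n, (i : ℤ)) * 2 = n * (n + 1) := by
  induction n with
  | zero => simp
  | succ m ih =>
    rw [Finset.sum_Icc_succ_top (by omega)]
    push_cast
    push_cast at ih
    linarith

lemma mm_icc_icc (n : ℕ) : mm (Multiset.Icc 1 n) (Multiset.Icc 1 n) = 0 := by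
  have hpt : ∀ a ∈ Multiset.Icc 1 n,
      ((Multiset.Icc 1 n).map (fun b => sgn a b)).sum = 2 * (a : ℤ) - n - 1 := by
    intro a ha
    rw [Multiset.mem_Icc] at ha
    rw [sgn_row, filter_lt_card n a ha.1 ha.2, filter_gt_card n a ha.1 ha.2]
    omega
  unfold mm
  rw [Multiset.map_congr rfl hpt]
  rw [show ((Multiset.Icc 1 n).map (fun a : ℕ => 2 * (a : ℤ) - n - 1)).sum
      = ∑ a ∈ Finset.Icc 1 n, (2 * (a : ℤ) - n - 1) from rfl]
  have hg := sum_icc_two n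
  have hc : (Finset.Icc 1 n).card = n := by rw [Nat.card_Icc]; omega
  rw [Finset.sum_sub_distrib, Finset.sum_sub_distrib, ← Finset.mul_sum,
    Finset.sum_const, Finset.sum_const, hc]
  simp only [nsmul_eq_mul]
  linarith

lemma pair_le_icc (n a b : ℕ) (ha1 : 1 ≤ a) (ha2 : a ≤ n) (hb1 : 1 ≤ b) (hb2 : b ≤ n)
    (hab : a ≠ b) : ({a, b} : Multiset ℕ) ≤ Multiset.Icc 1 n := by
  rw [Multiset.le_iff_count]
  intro c
  have hnd : (Multiset.Icc 1 n).Nodup := Multiset.nodup_Icc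
  have hcnt : Multiset.count c ({a, b} : Multiset ℕ)
      = (if c = a then 1 else 0) + (if c = b then 1 else 0) := by
    simp [Multiset.insert_eq_cons, Multiset.count_cons, Multiset.count_singleton]
    split_ifs <;> omega
  rw [hcnt]
  by_cases hca : c = a
  · subst hca
    rw [Multiset.count_eq_one_of_mem hnd (Multiset.mem_Icc.mpr ⟨ha1, ha2⟩)]
    simp [hab]
  · by_cases hcb : c = b
    · subst hcb
      rw [Multiset.count_eq_one_of_mem hnd (Multiset.mem_Icc.mpr ⟨hb1, hb2⟩)]
      simp [hca]
    · simp [hca, hcb]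

lemma sgn_K (x : ℕ) :
    sgn (x+2) (x+1) - sgn (x+2) x - sgn (x+1) (x+1) + sgn (x+1) x = 1 := by
  unfold sgn; split_ifs <;> omega

lemma sgn_A (x z : ℕ) (hz : 2 ≤ z) (h : z ≠ x + 1) :
    0 ≤ sgn (x+2) (z-1) - sgn (x+2) z - sgn (x+1) (z-1) + sgn (x+1) z := by
  unfold sgn; split_ifs <;> omega

lemma sgn_B (x y : ℕ) (hy : 2 ≤ y) (h : y ≠ x + 2) :
    0 ≤ sgn (y-1) (x+1) - sgn (y-1) x - sgn y (x+1) + sgn y x := by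
  unfold sgn; split_ifs <;> omega

lemma sgn_C (y z : ℕ) :
    -1 ≤ sgn (y-1) (z-1) - sgn (y-1) z - sgn y (z-1) + sgn y z := by
  unfold sgn; split_ifs <;> omega

end BFT

namespace BFT

lemma mm_pp (c d e f : ℕ) :
    mm {c, d} {e, f} = sgn c e + sgn c f + sgn d e + sgn d f := by
  rw [mm_pair_left, mm_pair_right, mm_pair_right, mm_single_single, mm_single_single,
    mm_single_single, mm_single_single]
  ring

lemma step_eq (n a b : ℕ) (h : validStep n a b) :
    stepDie n a b + {a, b} = Multiset.Icc 1 n + {a + 1, b - 1} := by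
  obtain ⟨h1, h2, h3, h4, h5, h6⟩ := h
  have hle : ({a, b} : Multiset ℕ) ≤ Multiset.Icc 1 n :=
    pair_le_icc n a b h1 (by omega) (by omega) h4 (Ne.symm h5)
  unfold stepDie
  rw [add_right_comm, tsub_add_cancel_of_le hle]

end BFT

theorem beats_form_three (n x y z : ℕ) (hn : 4 ≤ n)
    (h1 : validStep n (x + 1) y) (h2 : validStep n x z)
    (hnotie : ¬ diceTies (stepDie n (x + 1) y) (stepDie n x z)) :
    diceBeats (stepDie n (x + 1) y) (stepDie n x z) := by
  obtain ⟨ha1, ha2, hy1, hy2, hy3, hy4⟩ := h1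
  obtain ⟨hx1, hx2, hz1, hz2, hz3, hz4⟩ := h2
  set I := Multiset.Icc 1 n with hI
  set S := stepDie n (x + 1) y with hSdef
  set T := stepDie n x z with hTdef
  have hS : S + {x + 1, y} = I + {x + 2, y - 1} := BFT.step_eq n (x + 1) y ⟨ha1, ha2, hy1, hy2, hy3, hy4⟩
  have hT : T + {x, z} = I + {x + 1, z - 1} := BFT.step_eq n x z ⟨hx1, hx2, hz1, hz2, hz3, hz4⟩
  have eS : ∀ X, BFT.mm S X = BFT.mm I X + BFT.mm {x + 2, y - 1} X - BFT.mm {x + 1, y} X := by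
    intro X
    have h := BFT.mm_add_left S {x + 1, y} X
    rw [hS, BFT.mm_add_left] at h
    linarith
  have eT : ∀ X, BFT.mm X T = BFT.mm X I + BFT.mm X {x + 1, z - 1} - BFT.mm X {x, z} := by
    intro X
    have h := BFT.mm_add_right X T {x, z}
    rw [hT, BFT.mm_add_right] at h
    linarith
  have key : BFT.mm S T = BFT.mm I I + BFT.mm I {x + 1, z - 1} - BFT.mm I {x, z}
      + BFT.mm {x + 2, y - 1} I + BFT.mm {x + 2, y - 1} {x + 1, z - 1}
      - BFT.mm {x + 2, y - 1} {x, z}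
      - BFT.mm {x + 1, y} I - BFT.mm {x + 1, y} {x + 1, z - 1}
      + BFT.mm {x + 1, y} {x, z} := by
    rw [eS T, eT I, eT ({x + 2, y - 1} : Multiset ℕ), eT ({x + 1, y} : Multiset ℕ)]
    ring
  -- ranges
  have hxn : x + 2 ≤ n := by omega
  -- values
  have v1 : BFT.mm I I = 0 := BFT.mm_icc_icc n
  have v2 : BFT.mm I {x + 1} = (n : ℤ) + 1 - 2 * (x + 1) := by
    have := BFT.mm_icc_single (x + 1) n (by omega) (by omega); push_cast at this ⊢; linarith
  have v3 : BFT.mm I {z - 1} = (n : ℤ) + 1 - 2 * ((z : ℤ) - 1) := by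
    have := BFT.mm_icc_single (z - 1) n (by omega) (by omega)
    have hc : ((z - 1 : ℕ) : ℤ) = (z : ℤ) - 1 := by omega
    rw [hc] at this; linarith
  have v4 : BFT.mm I {x} = (n : ℤ) + 1 - 2 * x := BFT.mm_icc_single x n hx1 (by omega)
  have v5 : BFT.mm I {z} = (n : ℤ) + 1 - 2 * z := BFT.mm_icc_single z n (by omega) hz2
  have v6 : BFT.mm {x + 2} I = 2 * ((x : ℤ) + 2) - n - 1 := by
    have := BFT.mm_single_icc (x + 2) n (by omega) hxn; push_cast at this ⊢; linarith
  have v7 : BFT.mm {y - 1} I = 2 * ((y : ℤ) - 1) - n - 1 := by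
    have := BFT.mm_single_icc (y - 1) n (by omega) (by omega)
    have hc : ((y - 1 : ℕ) : ℤ) = (y : ℤ) - 1 := by omega
    rw [hc] at this; linarith
  have v8 : BFT.mm {x + 1} I = 2 * ((x : ℤ) + 1) - n - 1 := by
    have := BFT.mm_single_icc (x + 1) n (by omega) (by omega); push_cast at this ⊢; linarith
  have v9 : BFT.mm {y} I = 2 * (y : ℤ) - n - 1 :=
    BFT.mm_single_icc y n (by omega) hy2
  have p1 := BFT.mm_pp (x + 2) (y - 1) (x + 1) (z - 1)
  have p2 := BFT.mm_pp (x + 2) (y - 1) x z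
  have p3 := BFT.mm_pp (x + 1) y (x + 1) (z - 1)
  have p4 := BFT.mm_pp (x + 1) y x z
  have w2 : BFT.mm I {x + 1, z - 1} = BFT.mm I {x + 1} + BFT.mm I {z - 1} :=
    BFT.mm_pair_right I (x + 1) (z - 1)
  have w3 : BFT.mm I {x, z} = BFT.mm I {x} + BFT.mm I {z} := BFT.mm_pair_right I x z
  have w4 : BFT.mm {x + 2, y - 1} I = BFT.mm {x + 2} I + BFT.mm {y - 1} I :=
    BFT.mm_pair_left (x + 2) (y - 1) I
  have w5 : BFT.mm {x + 1, y} I = BFT.mm {x + 1} I + BFT.mm {y} I :=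
    BFT.mm_pair_left (x + 1) y I
  have hK := BFT.sgn_K x
  have hA := BFT.sgn_A x z hz1 hz4
  have hB := BFT.sgn_B x y hy1 hy4
  have hC := BFT.sgn_C y z
  have hsx1 : BFT.sgn (x + 1) (x + 1) = 0 := by simp [BFT.sgn]
  have hM : 0 ≤ BFT.mm S T := by
    rw [key, w2, w3, w4, w5, v1, v2, v3, v4, v5, v6, v7, v8, v9, p1, p2, p3, p4]
    linarith
  have hw := BFT.wins_sub S T
  have hne : BFT.mm S T ≠ 0 := by
    intro h0
    apply hnotie
    have hz : (diceWins S T : ℤ) = (diceWins T S : ℤ) := by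
      rw [h0] at hw; linarith
    exact_mod_cast hz
  have hpos : 0 < BFT.mm S T := lt_of_le_of_ne hM (Ne.symm hne)
  have hlt : (diceWins T S : ℤ) < (diceWins S T : ℤ) := by linarith
  exact_mod_cast hlt
end

section
/- Let n ≥ 4 and let X, Y, Z be such that A = s(X, X+2), B = s(X+1, Z), and C = s(X+2, Y) are pairwise distinct proper n-sided one-step dice no two of which tie. Then A beats C, C beats B, and B beats A; in particular {A,B,C} is intransitive. -/
lemma count_Icc (v n : ℕ) : (Multiset.Icc 1 n).count v = if 1 ≤ v ∧ v ≤ n then 1 else 0 := by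
  split_ifs with h
  · exact Multiset.count_eq_one_of_mem (Finset.Icc 1 n).nodup (by simp [Multiset.Icc]; omega)
  · exact Multiset.count_eq_zero_of_notMem (by simp [Multiset.Icc]; omega)

lemma count_pair (v c d : ℕ) : ({c, d} : Multiset ℕ).count v
    = (if v = c then 1 else 0) + (if v = d then 1 else 0) := by
  simp [Multiset.count_cons, Multiset.count_singleton]; split_ifs <;> omega

lemma pair_le_Icc {n c d : ℕ} (hc1 : 1 ≤ c) (hcn : c ≤ n) (hd1 : 1 ≤ d) (hdn : d ≤ n)
    (hne : c ≠ d) : ({c, d} : Multiset ℕ) ≤ Multiset.Icc 1 n := by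
  rw [Multiset.le_iff_count]
  intro v
  rw [count_pair, count_Icc]
  split_ifs <;> omega

lemma count_stepDie (n a b v : ℕ) : (stepDie n a b).count v
    = (if 1 ≤ v ∧ v ≤ n then 1 else 0)
      - ((if v = a then 1 else 0) + (if v = b then 1 else 0))
      + ((if v = a + 1 then 1 else 0) + (if v = b - 1 then 1 else 0)) := by
  rw [stepDie, Multiset.count_add, Multiset.count_sub, count_Icc, count_pair, count_pair]

lemma stepDie_add (n c d : ℕ) (h : validStep n c d) :
    stepDie n c d + {c, d} = Multiset.Icc 1 n + {c + 1, d - 1} := by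
  obtain ⟨h1, h2, h3, h4, h5, h6⟩ := h
  rw [stepDie, add_right_comm, tsub_add_cancel_of_le
    (pair_le_Icc h1 (by omega) (by omega) h4 (by omega))]

lemma card_filter_Icc (x n : ℕ) (hx : x ≤ n + 1) :
    ((Multiset.Icc 1 n).filter (fun b => b < x)).card = x - 1 := by
  have : (Multiset.Icc 1 n).filter (fun b => b < x) = ((Finset.Icc 1 n).filter (fun b => b < x)).val := by
    simp [Multiset.Icc, Finset.filter]
  rw [this]
  have : (Finset.Icc 1 n).filter (fun b => b < x) = Finset.Icc 1 (x - 1) := by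
    ext y; simp; omega
  rw [Finset.card_val, this, Nat.card_Icc]; omega

lemma card_filter_pair (x c d : ℕ) : (({c, d} : Multiset ℕ).filter (fun b => b < x)).card
    = (if c < x then 1 else 0) + (if d < x then 1 else 0) := by
  simp [Multiset.filter_cons, Multiset.filter_singleton]
  split_ifs <;> simp

lemma step_filt (n c d x : ℕ) (h : validStep n c d) (hx1 : 1 ≤ x) (hxn : x ≤ n) :
    ((stepDie n c d).filter (fun b => b < x)).card + (if x = c + 1 then 1 else 0)
      = (x - 1) + (if x = d then 1 else 0) := by
  obtain ⟨h1, h2, h3, h4, h5, h6⟩ := h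
  have key := congrArg (fun S => (S.filter (fun b => b < x)).card)
    (stepDie_add n c d ⟨h1, h2, h3, h4, h5, h6⟩)
  simp only [Multiset.filter_add, Multiset.card_add, card_filter_pair,
    card_filter_Icc x n (by omega)] at key
  split_ifs at key ⊢ <;> omega

lemma wins_step (n c d : ℕ) (h : validStep n c d) (A : Multiset ℕ)
    (hA : ∀ x ∈ A, 1 ≤ x ∧ x ≤ n) :
    diceWins A (stepDie n c d) + A.count (c + 1) = (A.map (fun x => x - 1)).sum + A.count d := by
  induction A using Multiset.induction_on with
  | empty => simp [diceWins]
  | cons x s ih =>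
    have hx := hA x (Multiset.mem_cons_self x s)
    have hs := ih (fun y hy => hA y (Multiset.mem_cons_of_mem hy))
    have h1 := step_filt n c d x h hx.1 hx.2
    simp only [diceWins, Multiset.map_cons, Multiset.sum_cons, Multiset.count_cons] at *
    split_ifs at * <;> omega

lemma sum_map_pred (A : Multiset ℕ) (h : ∀ x ∈ A, 1 ≤ x) :
    (A.map (fun x => x - 1)).sum + Multiset.card A = A.sum := by
  induction A using Multiset.induction_on with
  | empty => simp
  | cons x s ih =>
    have hx := h x (Multiset.mem_cons_self x s)
    have hs := ih (fun y hy => h y (Multiset.mem_cons_of_mem hy))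
    simp only [Multiset.map_cons, Multiset.sum_cons, Multiset.card_cons]
    omega

lemma sum_stepDie (n c d : ℕ) (h : validStep n c d) :
    (stepDie n c d).sum = (Multiset.Icc 1 n).sum := by
  have key := congrArg Multiset.sum (stepDie_add n c d h)
  obtain ⟨h1, h2, h3, h4, h5, h6⟩ := h
  simp only [Multiset.insert_eq_cons, Multiset.sum_add, Multiset.sum_cons, Multiset.sum_singleton] at key
  omega

lemma card_stepDie (n c d : ℕ) (h : validStep n c d) :
    Multiset.card (stepDie n c d) = n := by
  have key := congrArg Multiset.card (stepDie_add n c d h)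
  simp only [Multiset.insert_eq_cons, Multiset.card_add, Multiset.card_cons, Multiset.card_singleton] at key
  have : Multiset.card (Multiset.Icc 1 n) = n := by
    show (Finset.Icc 1 n).val.card = n
    rw [Finset.card_val, Nat.card_Icc]; omega
  omega

lemma mem_stepDie (n c d : ℕ) (h : validStep n c d) :
    ∀ x ∈ stepDie n c d, 1 ≤ x ∧ x ≤ n := by
  intro x hx
  have hc := Multiset.count_pos.mpr hx
  rw [count_stepDie] at hc
  obtain ⟨h1, h2, h3, h4, h5, h6⟩ := h
  split_ifs at hc <;> omega

lemma step_vs_step (n a b c d : ℕ) (ha : validStep n a b) (hc : validStep n c d) :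
    diceWins (stepDie n a b) (stepDie n c d) + (stepDie n a b).count (c + 1)
      + (stepDie n c d).count b
    = diceWins (stepDie n c d) (stepDie n a b) + (stepDie n c d).count (a + 1)
      + (stepDie n a b).count d := by
  have h1 := wins_step n c d hc (stepDie n a b) (mem_stepDie n a b ha)
  have h2 := wins_step n a b ha (stepDie n c d) (mem_stepDie n c d hc)
  have s1 := sum_map_pred (stepDie n a b) (fun x hx => (mem_stepDie n a b ha x hx).1)
  have s2 := sum_map_pred (stepDie n c d) (fun x hx => (mem_stepDie n c d hc x hx).1)
  have e1 := sum_stepDie n a b ha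
  have e2 := sum_stepDie n c d hc
  have c1 := card_stepDie n a b ha
  have c2 := card_stepDie n c d hc
  omega

set_option maxHeartbeats 2000000 in
/-- `A = s(X,X+2)`, `B = s(X+1,Z)`, `C = s(X+2,Y)` form an intransitive
triple with `A > C > B > A`. -/
theorem case_two_intransitive (n X Y Z : ℕ) (hn : 4 ≤ n)
    (hA : validStep n X (X + 2)) (hB : validStep n (X + 1) Z) (hC : validStep n (X + 2) Y)
    (hAB : stepDie n X (X + 2) ≠ stepDie n (X + 1) Z)
    (hAC : stepDie n X (X + 2) ≠ stepDie n (X + 2) Y)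
    (hBC : stepDie n (X + 1) Z ≠ stepDie n (X + 2) Y)
    (tAB : ¬ diceTies (stepDie n X (X + 2)) (stepDie n (X + 1) Z))
    (tAC : ¬ diceTies (stepDie n X (X + 2)) (stepDie n (X + 2) Y))
    (tBC : ¬ diceTies (stepDie n (X + 1) Z) (stepDie n (X + 2) Y)) :
    diceBeats (stepDie n X (X + 2)) (stepDie n (X + 2) Y) ∧
    diceBeats (stepDie n (X + 2) Y) (stepDie n (X + 1) Z) ∧
    diceBeats (stepDie n (X + 1) Z) (stepDie n X (X + 2)) ∧
    IntransitiveTriple {stepDie n X (X + 2), stepDie n (X + 1) Z, stepDie n (X + 2) Y} := by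
  obtain ⟨a1, a2, a3, a4, a5, a6⟩ := id hA
  obtain ⟨b1, b2, b3, b4, b5, b6⟩ := id hB
  obtain ⟨g1, g2, g3, g4, g5, g6⟩ := id hC
  unfold diceTies at tAB tAC tBC
  -- Pair A vs C
  have cAC1 : (stepDie n X (X + 2)).count (X + 2 + 1) = 1 := by
    rw [count_stepDie]; split_ifs <;> omega
  have cAC2 : (stepDie n (X + 2) Y).count (X + 2) = 0 := by
    rw [count_stepDie]; split_ifs <;> omega
  have cAC3 : (stepDie n (X + 2) Y).count (X + 1) = if Y = X + 1 then 0 else 1 := by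
    rw [count_stepDie]; split_ifs <;> omega
  have cAC4 : (stepDie n X (X + 2)).count Y
      = if Y = X + 1 then 3 else if Y = X then 0 else 1 := by
    rw [count_stepDie]; split_ifs <;> omega
  have E1 := step_vs_step n X (X + 2) (X + 2) Y hA hC
  rw [cAC1, cAC2, cAC3, cAC4] at E1
  have bAC : diceBeats (stepDie n X (X + 2)) (stepDie n (X + 2) Y) := by
    unfold diceBeats
    split_ifs at E1 <;> omega
  -- Pair C vs B
  have cCB1 : (stepDie n (X + 2) Y).count (X + 1 + 1) = 0 := by
    rw [count_stepDie]; split_ifs <;> omega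
  have cCB2 : (stepDie n (X + 1) Z).count Y
      = if Y = X + 1 ∨ Y = Z then 0 else if Y = Z - 1 then 2 else 1 := by
    rw [count_stepDie]; split_ifs <;> omega
  have cCB3 : (stepDie n (X + 1) Z).count (X + 2 + 1)
      = if Z = X + 3 then 0 else if Z = X + 4 then 2 else 1 := by
    rw [count_stepDie]; split_ifs <;> omega
  have cCB4 : (stepDie n (X + 2) Y).count Z
      = if Z = Y then 0
        else 1 + (if Z = X + 3 then 1 else 0) + (if Z = Y - 1 then 1 else 0) := by
    rw [count_stepDie]; split_ifs <;> omega
  have E2 := step_vs_step n (X + 2) Y (X + 1) Z hC hB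
  rw [cCB1, cCB2, cCB3, cCB4] at E2
  have bCB : diceBeats (stepDie n (X + 2) Y) (stepDie n (X + 1) Z) := by
    unfold diceBeats
    split_ifs at E2 <;> omega
  -- Pair B vs A
  have cBA1 : (stepDie n (X + 1) Z).count (X + 1) = 0 := by
    rw [count_stepDie]; split_ifs <;> omega
  have cBA2 : (stepDie n X (X + 2)).count Z = if Z = X then 0 else 1 := by
    rw [count_stepDie]; split_ifs <;> omega
  have cBA3 : (stepDie n X (X + 2)).count (X + 1 + 1) = 0 := by
    rw [count_stepDie]; split_ifs <;> omega
  have cBA4 : (stepDie n (X + 1) Z).count (X + 2) = if Z = X + 3 then 3 else 2 := by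
    rw [count_stepDie]; split_ifs <;> omega
  have E3 := step_vs_step n (X + 1) Z X (X + 2) hB hA
  rw [cBA1, cBA2, cBA3, cBA4] at E3
  have bBA : diceBeats (stepDie n (X + 1) Z) (stepDie n X (X + 2)) := by
    unfold diceBeats
    split_ifs at E3 <;> omega
  refine ⟨bAC, bCB, bBA, stepDie n X (X + 2), stepDie n (X + 2) Y, stepDie n (X + 1) Z,
    ?_, bAC, bCB, bBA⟩
  rw [Finset.pair_comm (stepDie n (X + 1) Z) (stepDie n (X + 2) Y)]
end
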